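/- Let X_N be exchangeable {0,1}-valued with γ = ΣX_i symmetric about N/2. If γ is tighter than the Binomial(N,1/2), then the gambler's belief holds: for every n < N and every x ∈ {0,1}^n with positive probability, if the number of 0's among x_1,...,x_n strictly exceeds the number of 1's, then P(X_{n+1}=1 | X_1=x_1,...,X_n=x_n) > 1/2. -/

import Mathlib

open Finset

/-- number of 1's (trues) in a 0-1 vector -/
def cnt {n : ℕ} (x : Fin n → Bool) : ℕ := (Finset.univ.filter fun i => x i = true).card

/-- P(γ = k): probability that the total count of 1's equals k -/
def gam (N : ℕ) (p : (Fin N → Bool) → ℝ) (k : ℕ) : ℝ :=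
  ∑ y : Fin N → Bool, if cnt y = k then p y else 0

/-- P(X_1 = x_1, ..., X_n = x_n): probability of observing the prefix x -/
def pref (N : ℕ) (p : (Fin N → Bool) → ℝ) {n : ℕ} (hn : n ≤ N) (x : Fin n → Bool) : ℝ :=
  ∑ y : Fin N → Bool, if (∀ i : Fin n, y (Fin.castLE hn i) = x i) then p y else 0

/-! Exchangeability makes `p y = q (cnt y)` with `q i = P(γ = i) / (N choose i)`; symmetry and
tightness say that `q` is symmetric about `N / 2` and strictly increasing up to `N / 2`, so
`q a < q b` whenever `a < b` and `a + b < N`. After a prefix `x` with `k` ones, the two one-step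
extensions have probabilities `∑ⱼ C(m, j) q (k + 1 + j)` and `∑ⱼ C(m, j) q (k + j)`, where
`m = N - n - 1`. Reflecting `j ↦ m - j` in the first sum, their difference is `∑ⱼ C(m, j) g j` with
`g j = q (k + m + 1 - j) - q (k + j)`, which is antisymmetric about `(m + 1) / 2` and positive below
it because `2 k + m + 1 < N`. Pairing `j` with `m + 1 - j`, and using that `C(m, ·)` grows towards
the middle, shows that this sum is positive. -/

theorem cnt_append {m n : ℕ} (u : Fin m → Bool) (v : Fin n → Bool) :
    cnt (Fin.append u v) = cnt u + cnt v := by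
  simp only [cnt, card_filter, Fin.sum_univ_add, Fin.append_left, Fin.append_right]

theorem cnt_snoc {n : ℕ} (x : Fin n → Bool) (b : Bool) :
    cnt (Fin.snoc x b : Fin (n + 1) → Bool) = cnt x + b.toNat := by
  simp only [cnt, card_filter, Fin.sum_univ_castSucc, Fin.snoc_castSucc, Fin.snoc_last]
  cases b <;> rfl

theorem sum_comp_cnt {M : Type*} [AddCommMonoid M] (m : ℕ) (f : ℕ → M) :
    ∑ z : Fin m → Bool, f (cnt z) = ∑ j ∈ range (m + 1), m.choose j • f j := by
  have h := sum_powerset_apply_card f (x := (univ : Finset (Fin m)))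
  rw [powerset_univ, card_univ, Fintype.card_fin] at h
  rw [← h]
  exact sum_nbij' (fun z => univ.filter (z · = true)) (fun s i => decide (i ∈ s))
    (by simp) (by simp) (fun z _ => by ext; simp) (fun s _ => by ext; simp) (fun z _ => rfl)

theorem exists_perm_comp_eq_of_cnt_eq {N : ℕ} {y y' : Fin N → Bool} (h : cnt y = cnt y') :
    ∃ σ : Equiv.Perm (Fin N), y ∘ σ = y' := by
  have hfib : ∀ b, Fintype.card {i // y' i = b} = Fintype.card {i // y i = b} := by
    have htrue : ∀ z : Fin N → Bool, Fintype.card {i // z i = true} = cnt z := fun z =>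
      Fintype.card_subtype _
    have hfalse : ∀ z : Fin N → Bool, Fintype.card {i // z i = false} = N - cnt z := fun z => by
      simp only [← htrue, ← Bool.not_eq_true]
      rw [Fintype.card_subtype_compl, Fintype.card_fin]
    rintro (_ | _)
    · rw [hfalse, hfalse, h]
    · rw [htrue, htrue, h]
  refine ⟨Equiv.ofFiberEquiv (fun b => Fintype.equivOfCardEq (hfib b)), funext fun i => ?_⟩
  exact Equiv.ofFiberEquiv_map _ i

section CountFunction

variable {N : ℕ} {p : (Fin N → Bool) → ℝ} {q : ℕ → ℝ}

theorem exists_eq_comp_cnt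
    (hexch : ∀ σ : Equiv.Perm (Fin N), ∀ y : Fin N → Bool, p (y ∘ σ) = p y) :
    ∃ q : ℕ → ℝ, ∀ y, p y = q (cnt y) := by
  classical
  refine ⟨fun j => if h : ∃ y, cnt y = j then p h.choose else 0, fun y => ?_⟩
  have h : ∃ y', cnt y' = cnt y := ⟨y, rfl⟩
  obtain ⟨σ, hσ⟩ := exists_perm_comp_eq_of_cnt_eq h.choose_spec
  dsimp only
  rw [dif_pos h]
  exact (congrArg p hσ).symm.trans (hexch σ _)

theorem gam_nonneg (hnn : ∀ y, 0 ≤ p y) (k : ℕ) : 0 ≤ gam N p k :=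
  sum_nonneg fun y _ => by split_ifs <;> simp [hnn y]

theorem gam_eq_choose_mul (hp : ∀ y, p y = q (cnt y)) (k : ℕ) :
    gam N p k = N.choose k * q k := by
  simp only [gam, hp, sum_comp_cnt N (fun j => if j = k then q j else 0), nsmul_eq_mul,
    mul_ite, mul_zero, sum_ite_eq', mem_range]
  split_ifs with hk
  · rfl
  · rw [Nat.choose_eq_zero_of_lt (by omega), Nat.cast_zero, zero_mul]

theorem lt_of_gam_div_gam_gt (hp : ∀ y, p y = q (cnt y)) (hnn : ∀ y, 0 ≤ p y) {i : ℕ}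
    (hi : 1 ≤ i) (hiN : i ≤ N)
    (h : gam N p i / gam N p (i - 1) > ((N - i + 1 : ℕ) : ℝ) / (i : ℝ)) :
    q (i - 1) < q i := by
  obtain ⟨j, rfl⟩ := Nat.exists_eq_add_of_le' hi
  rw [Nat.add_sub_cancel, show N - (j + 1) + 1 = N - j by omega] at h
  have hratio : (0 : ℝ) < ((N - j : ℕ) : ℝ) / ((j + 1 : ℕ) : ℝ) :=
    div_pos (by exact_mod_cast Nat.sub_pos_of_lt hiN) (by positivity)
  have hgam : 0 < gam N p j := by
    refine (gam_nonneg hnn j).lt_of_ne fun h0 => ?_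
    rw [← h0, div_zero] at h
    exact h.not_gt hratio
  have hchoose : (N.choose (j + 1) : ℝ) * ((j + 1 : ℕ) : ℝ) = N.choose j * ((N - j : ℕ) : ℝ) := by
    exact_mod_cast Nat.choose_succ_right_eq N j
  have hpos : (0 : ℝ) < N.choose j * ((N - j : ℕ) : ℝ) :=
    mul_pos (by exact_mod_cast Nat.choose_pos (by omega)) (by exact_mod_cast Nat.sub_pos_of_lt hiN)
  rw [gt_iff_lt, div_lt_div_iff₀ (by positivity) hgam, gam_eq_choose_mul hp,
    gam_eq_choose_mul hp] at h
  refine lt_of_mul_lt_mul_left ?_ hpos.le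
  calc N.choose j * ((N - j : ℕ) : ℝ) * q j = ((N - j : ℕ) : ℝ) * (N.choose j * q j) := by ring
    _ < N.choose (j + 1) * q (j + 1) * ((j + 1 : ℕ) : ℝ) := h
    _ = N.choose j * ((N - j : ℕ) : ℝ) * q (j + 1) := by rw [← hchoose]; ring

theorem pref_eq_sum (hp : ∀ y, p y = q (cnt y)) {ν : ℕ} (hν : ν ≤ N) (w : Fin ν → Bool) :
    pref N p hν w = ∑ j ∈ range (N - ν + 1), (N - ν).choose j * q (cnt w + j) := by
  obtain ⟨r, rfl⟩ := Nat.exists_eq_add_of_le hν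
  have happ : ∀ (u : Fin ν → Bool) (z : Fin r → Bool) i,
      Fin.append u z (Fin.castLE hν i) = u i := fun u z i => Fin.append_left u z i
  rw [Nat.add_sub_cancel_left, pref, ← (Fin.appendEquiv ν r).sum_comp, Fintype.sum_prod_type]
  simp only [Fin.appendEquiv_apply, happ, ← funext_iff]
  rw [Fintype.sum_eq_single w fun u hu => by simp only [hu, if_false, sum_const_zero]]
  change ∑ z, (if w = w then p (Fin.append w z) else 0) = _
  simp only [if_true, hp, cnt_append, sum_comp_cnt r (fun j => q (cnt w + j)), nsmul_eq_mul]

end CountFunction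

theorem pref_eq_pref_snoc_add {N n : ℕ} (p : (Fin N → Bool) → ℝ) (hn : n < N)
    (x : Fin n → Bool) :
    pref N p hn.le x = pref N p hn (Fin.snoc x true) + pref N p hn (Fin.snoc x false) := by
  simp only [pref, ← sum_add_distrib, Fin.forall_fin_succ', Fin.snoc_castSucc, Fin.snoc_last]
  refine sum_congr rfl fun y _ => ?_
  have hcast : ∀ i : Fin n, Fin.castLE hn i.castSucc = Fin.castLE hn.le i := fun _ => rfl
  simp only [hcast]
  cases y (Fin.castLE hn (Fin.last n)) <;> simp

theorem choose_succ_sub_le_choose {m j : ℕ} (h : 2 * j ≤ m) :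
    m.choose (m + 1 - j) ≤ m.choose j := by
  rcases j with _ | j
  · simp
  · rw [show m + 1 - (j + 1) = m - j by omega, Nat.choose_symm (by omega)]
    exact Nat.choose_le_succ_of_lt_half_left (by omega)

theorem sum_choose_mul_pos_of_antisymm {m : ℕ} {g : ℕ → ℝ}
    (hanti : ∀ j ≤ m + 1, g (m + 1 - j) = -g j) (hpos : ∀ j, 2 * j ≤ m → 0 < g j) :
    0 < ∑ j ∈ range (m + 1), m.choose j * g j := by
  set c : ℕ → ℝ := fun j => m.choose j - m.choose (m + 1 - j)
  have hextend : ∑ j ∈ range (m + 1), m.choose j * g j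
      = ∑ j ∈ range (m + 2), m.choose j * g j := by
    rw [sum_range_succ _ (m + 1), Nat.choose_succ_self, Nat.cast_zero, zero_mul, add_zero]
  have hrefl : ∑ j ∈ range (m + 2), m.choose j * g j
      = -∑ j ∈ range (m + 2), m.choose (m + 1 - j) * g j := by
    rw [← sum_range_reflect, ← sum_neg_distrib]
    refine sum_congr rfl fun j hj => ?_
    rw [mem_range] at hj
    rw [show m + 2 - 1 - j = m + 1 - j by omega, hanti j (by omega)]
    ring
  have hlow : ∀ j, 2 * j ≤ m → 0 ≤ c j * g j := fun j hj =>
    mul_nonneg (sub_nonneg.2 (by exact_mod_cast choose_succ_sub_le_choose hj)) (hpos j hj).le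
  have hterm : ∀ j ∈ range (m + 2), 0 ≤ c j * g j := by
    intro j hj
    rw [mem_range] at hj
    rcases le_or_gt (2 * j) m with hj' | hj'
    · exact hlow j hj'
    · rcases (show 2 * j = m + 1 ∨ 2 * j > m + 1 by omega) with hmid | hhigh
      · have hg : g j = 0 := by
          have := hanti j (by omega)
          rw [show m + 1 - j = j by omega] at this
          linarith
        simp [hg]
      · have := hlow (m + 1 - j) (by omega)
        have hg := hanti (m + 1 - j) (by omega)
        rw [show m + 1 - (m + 1 - j) = j by omega] at hg
        simp only [c, show m + 1 - (m + 1 - j) = j by omega] at this ⊢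
        nlinarith
  have h0 : 0 < c 0 * g 0 := by
    simpa [c, Nat.choose_eq_zero_of_lt (Nat.lt_succ_self m)] using hpos 0 (by omega)
  have hsum : 0 < ∑ j ∈ range (m + 2), c j * g j :=
    sum_pos' hterm ⟨0, mem_range.2 (by omega), h0⟩
  have htwice : ∑ j ∈ range (m + 2), c j * g j = 2 * ∑ j ∈ range (m + 1), m.choose j * g j := by
    simp only [c, sub_mul, sum_sub_distrib]
    rw [hextend]
    linarith
  linarith

theorem lt_of_add_lt_of_strictMonoOn {β : Type*} [Preorder β] {N : ℕ} {q : ℕ → β}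
    (hsymm : ∀ i ≤ N, q i = q (N - i)) (hmono : StrictMonoOn q (Set.Iic (N / 2)))
    {a b : ℕ} (hab : a < b) (h : a + b < N) : q a < q b := by
  rcases le_or_gt b (N / 2) with hb | hb
  · exact hmono (Set.mem_Iic.2 (by omega)) hb hab
  · rw [hsymm b (by omega)]
    exact hmono (Set.mem_Iic.2 (by omega)) (Set.mem_Iic.2 (by omega)) (by omega)

theorem sum_choose_mul_lt_sum_choose_mul_succ {N k m : ℕ} {q : ℕ → ℝ}
    (hq : ∀ a b, a < b → a + b < N → q a < q b) (h : 2 * k + m + 1 < N) :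
    ∑ j ∈ range (m + 1), m.choose j * q (k + j)
      < ∑ j ∈ range (m + 1), m.choose j * q (k + 1 + j) := by
  have hrefl : ∑ j ∈ range (m + 1), m.choose j * q (k + 1 + j)
      = ∑ j ∈ range (m + 1), m.choose j * q (k + (m + 1 - j)) := by
    rw [← sum_range_reflect]
    refine sum_congr rfl fun j hj => ?_
    rw [mem_range] at hj
    rw [show m + 1 - 1 - j = m - j by omega, Nat.choose_symm (by omega),
      show k + 1 + (m - j) = k + (m + 1 - j) by omega]
  have hpos : 0 < ∑ j ∈ range (m + 1), m.choose j * (q (k + (m + 1 - j)) - q (k + j)) := by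
    refine sum_choose_mul_pos_of_antisymm (fun j hj => ?_) (fun j hj => ?_)
    · rw [show m + 1 - (m + 1 - j) = j by omega]
      ring
    · exact sub_pos.2 (hq _ _ (by omega) (by omega))
  simp only [mul_sub, sum_sub_distrib] at hpos
  linarith

theorem tighter_gamblers_belief_general (N : ℕ) (p : (Fin N → Bool) → ℝ)
    (hnn : ∀ y, 0 ≤ p y)
    (hexch : ∀ σ : Equiv.Perm (Fin N), ∀ y : Fin N → Bool, p (y ∘ σ) = p y)
    (hsymm : ∀ i ≤ N, gam N p i = gam N p (N - i))
    (htighter : ∀ i : ℕ, 1 ≤ i → i ≤ N / 2 →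
      gam N p i / gam N p (i - 1) > ((N - i + 1 : ℕ) : ℝ) / (i : ℝ)) :
    ∀ (n : ℕ) (hn : n < N) (x : Fin n → Bool),
      2 * cnt x < n →
      0 < pref N p hn.le x →
      pref N p hn (Fin.snoc x true) / pref N p hn.le x > 1 / 2 := by
  intro n hn x hx hpref
  obtain ⟨q, hp⟩ := exists_eq_comp_cnt hexch
  have hq_symm : ∀ i ≤ N, q i = q (N - i) := fun i hi => by
    have := hsymm i hi
    rw [gam_eq_choose_mul hp, gam_eq_choose_mul hp, Nat.choose_symm hi] at this
    exact mul_left_cancel₀ (by exact_mod_cast (Nat.choose_pos hi).ne') this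
  have hq_mono : StrictMonoOn q (Set.Iic (N / 2)) := strictMonoOn_Iic_of_lt_succ fun i hi => by
    simpa using lt_of_gam_div_gam_gt hp hnn (i := i + 1) (by omega) (by omega)
      (htighter (i + 1) (by omega) (by omega))
  have hlt : pref N p hn (Fin.snoc x false) < pref N p hn (Fin.snoc x true) := by
    rw [pref_eq_sum hp, pref_eq_sum hp, cnt_snoc, cnt_snoc, Bool.toNat_false, Bool.toNat_true,
      add_zero]
    exact sum_choose_mul_lt_sum_choose_mul_succ
      (fun _ _ => lt_of_add_lt_of_strictMonoOn hq_symm hq_mono) (by omega)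
  rw [gt_iff_lt, lt_div_iff₀ hpref, pref_eq_pref_snoc_add p hn x]
  linarith

/-- Statement: if γ is symmetric about N/2 and tighter than the Binomial(N,1/2), then whenever
strictly more 0's than 1's have been observed, P(X_{n+1}=1 | x) > 1/2. -/
theorem tighter_gamblers_belief (N : ℕ) (p : (Fin N → Bool) → ℝ)
    (hnn : ∀ y, 0 ≤ p y) (hsum : ∑ y, p y = 1)
    (hexch : ∀ σ : Equiv.Perm (Fin N), ∀ y : Fin N → Bool, p (y ∘ σ) = p y)
    (hsymm : ∀ i ≤ N, gam N p i = gam N p (N - i))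
    (htighter : ∀ i : ℕ, 1 ≤ i → i ≤ N / 2 →
      gam N p i / gam N p (i - 1) > ((N - i + 1 : ℕ) : ℝ) / (i : ℝ)) :
    ∀ (n : ℕ) (hn : n < N) (x : Fin n → Bool),
      2 * cnt x < n →
      0 < pref N p hn.le x →
      pref N p hn (Fin.snoc x true) / pref N p hn.le x > 1 / 2 :=
  tighter_gamblers_belief_general N p hnn hexch hsymm htighter
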